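/- Error due to regularization on inputs in the range of the covariance (Lemma B.5, finite-dimensional form): Let Σ_x ∈ ℝ^{d_x×d_x} be symmetric positive semidefinite, let W ∈ ℝ^{d_y×d_x}, set Σ_yx = W Σ_x and, for λ > 0, W_λ = Σ_yx (Σ_x + λI)^{−1}. Then for any x of the form x = Σ_x^{1/2} v with ‖v‖ ≤ C, one has ‖(W_λ − W) x‖ ≤ (1/2)·√λ·‖W‖_F·C, where ‖W‖_F is the Frobenius (Hilbert–Schmidt) norm of W. -/

import Mathlib

open scoped Matrix.Norms.L2Operator

section OldSqrt

open scoped ComplexOrder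

/-- The square root of a positive semidefinite matrix, as `Matrix.PosSemidef.sqrt` was defined
in the older Mathlib (removed since). -/
noncomputable def Matrix.PosSemidef.sqrt {n 𝕜 : Type*} [Fintype n] [DecidableEq n] [RCLike 𝕜]
    {A : Matrix n n 𝕜} (hA : A.PosSemidef) : Matrix n n 𝕜 :=
  hA.1.eigenvectorUnitary.1 * Matrix.diagonal ((↑) ∘ Real.sqrt ∘ hA.1.eigenvalues) *
    (star hA.1.eigenvectorUnitary : Matrix n n 𝕜)

end OldSqrt

/-- The Frobenius (Hilbert–Schmidt) norm of a real matrix. -/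
noncomputable def frobNorm {m n : Type*} [Fintype m] [Fintype n]
    (A : Matrix m n ℝ) : ℝ :=
  Real.sqrt (∑ i, ∑ j, A i j ^ 2)

/-!
Since `W_λ - W = W (Σ (Σ + λ)⁻¹ - 1) = -λ W (Σ + λ)⁻¹`, we get
`(W_λ - W) x = -W B v` with `B = λ (Σ + λ)⁻¹ Σ^{1/2}`. Row-wise Cauchy–Schwarz gives
`‖W y‖ ≤ ‖W‖_F ‖y‖`, and `‖B‖ ≤ √λ / 2` because
`λ/4 - BᵀB = (Σ + λ)⁻¹ (λ/4 · (Σ - λ)²) (Σ + λ)⁻¹ ⪰ 0`, which rests on the identity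
`(Σ + λ)² - 4λΣ = (Σ - λ)²` (AM–GM on the spectrum of `Σ`).
-/

open Matrix

namespace Matrix.PosSemidef

open scoped ComplexOrder

variable {n 𝕜 : Type*} [Fintype n] [DecidableEq n] [RCLike 𝕜] {A : Matrix n n 𝕜}

theorem sqrt_mul_self (hA : A.PosSemidef) : hA.sqrt * hA.sqrt = A := by
  set U : Matrix n n 𝕜 := hA.1.eigenvectorUnitary.1
  have hU : star U * U = 1 := Unitary.coe_star_mul_self _
  conv_rhs => rw [hA.1.spectral_theorem, Unitary.conjStarAlgAut_apply]
  simp only [sqrt, mul_assoc]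
  rw [← mul_assoc (star U) U, hU, one_mul, ← mul_assoc (diagonal _), diagonal_mul_diagonal]
  congr 3
  funext i
  simp [← RCLike.ofReal_mul, Real.mul_self_sqrt (hA.eigenvalues_nonneg i)]

theorem isHermitian_sqrt (hA : A.PosSemidef) : hA.sqrt.IsHermitian := by
  simp only [IsHermitian, sqrt, conjTranspose_mul, conjTranspose_conjTranspose, mul_assoc,
    star_eq_conjTranspose, diagonal_conjTranspose]
  congr 3
  funext i
  simp

theorem commute_sqrt (hA : A.PosSemidef) : Commute hA.sqrt A := by
  simpa only [hA.sqrt_mul_self] using (Commute.refl hA.sqrt).mul_right (Commute.refl hA.sqrt)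

end Matrix.PosSemidef

theorem Matrix.mul_inv_add_smul_one {n R : Type*} [Fintype n] [DecidableEq n] [CommRing R]
    {A : Matrix n n R} {c : R} (h : IsUnit (A + c • 1).det) :
    A * (A + c • 1)⁻¹ = 1 - c • (A + c • 1)⁻¹ := by
  rw [eq_sub_iff_add_eq, ← smul_one_mul c (A + c • 1)⁻¹, ← add_mul, mul_nonsing_inv _ h]

theorem EuclideanSpace.real_norm_sq_eq_dotProduct {n : Type*} [Fintype n]
    (w : EuclideanSpace ℝ n) : ‖w‖ ^ 2 = w.ofLp ⬝ᵥ w.ofLp := by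
  rw [EuclideanSpace.real_norm_sq_eq]
  simp [dotProduct, sq]

theorem Matrix.norm_toEuclideanLin_le_frobNorm {m n : Type*} [Fintype m] [Fintype n]
    [DecidableEq n] (A : Matrix m n ℝ) (w : EuclideanSpace ℝ n) :
    ‖toEuclideanLin A w‖ ≤ frobNorm A * ‖w‖ := by
  simp only [EuclideanSpace.norm_eq, frobNorm, Real.norm_eq_abs, sq_abs]
  rw [← Real.sqrt_mul (by positivity), Finset.sum_mul]
  gcongr with i
  exact Finset.sum_mul_sq_le_sq_mul_sq _ _ _

theorem Matrix.norm_toEuclideanLin_le_of_posSemidef {m n : Type*} [Fintype m] [Fintype n]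
    [DecidableEq n] (B : Matrix m n ℝ) {r : ℝ} (hr : 0 ≤ r)
    (h : (r ^ 2 • 1 - Bᵀ * B).PosSemidef) (w : EuclideanSpace ℝ n) :
    ‖toEuclideanLin B w‖ ≤ r * ‖w‖ := by
  have hquad := h.dotProduct_mulVec_nonneg w.ofLp
  rw [star_trivial, sub_mulVec, dotProduct_sub, smul_mulVec, one_mulVec, dotProduct_smul,
    ← mulVec_mulVec, dotProduct_mulVec, vecMul_transpose, smul_eq_mul, sub_nonneg] at hquad
  refine le_of_sq_le_sq ?_ (by positivity)
  rwa [mul_pow, EuclideanSpace.real_norm_sq_eq_dotProduct,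
    EuclideanSpace.real_norm_sq_eq_dotProduct]

theorem Matrix.PosSemidef.posDef_add_smul_one {n : Type*} [DecidableEq n] {S : Matrix n n ℝ}
    (hS : S.PosSemidef) {c : ℝ} (hc : 0 < c) : (S + c • 1).PosDef :=
  PosDef.posSemidef_add hS (PosDef.one.smul hc)

namespace Matrix.PosSemidef

variable {n : Type*} [Fintype n] [DecidableEq n] {S : Matrix n n ℝ} {c : ℝ}

theorem isUnit_det_add_smul_one (hS : S.PosSemidef) (hc : 0 < c) : IsUnit (S + c • 1).det :=
  (hS.posDef_add_smul_one hc).det_pos.ne'.isUnit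

theorem commute_sqrt_inv_add_smul_one (hS : S.PosSemidef) (hc : 0 < c) :
    Commute hS.sqrt (S + c • 1)⁻¹ := by
  have hcomm : Commute hS.sqrt (S + c • 1) :=
    hS.commute_sqrt.add_right ((Commute.one_right _).smul_right c)
  obtain ⟨u, hu⟩ := (hS.posDef_add_smul_one hc).isUnit
  rw [← hu] at hcomm ⊢
  rw [← coe_units_inv]
  exact hcomm.units_inv_right

theorem transpose_resolvent_mul_sqrt_mul_self (hS : S.PosSemidef) (hc : 0 < c) :
    (c • ((S + c • 1)⁻¹ * hS.sqrt))ᵀ * (c • ((S + c • 1)⁻¹ * hS.sqrt)) =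
      c ^ 2 • ((S + c • 1)⁻¹ * S * (S + c • 1)⁻¹) := by
  have hP : ((S + c • 1)⁻¹)ᵀ = (S + c • 1)⁻¹ := (hS.posDef_add_smul_one hc).inv.isHermitian
  have hR : hS.sqrtᵀ = hS.sqrt := hS.isHermitian_sqrt
  have hRP := (hS.commute_sqrt_inv_add_smul_one hc).eq
  rw [transpose_smul, transpose_mul, hP, hR, smul_mul_smul_comm, sq, hRP]
  nth_rewrite 2 [← hRP]
  rw [mul_assoc, ← mul_assoc hS.sqrt, hS.sqrt_mul_self, mul_assoc]

theorem posSemidef_smul_one_sub_resolvent (hS : S.PosSemidef) (hc : 0 < c) :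
    ((c / 4) • 1 - c ^ 2 • ((S + c • 1)⁻¹ * S * (S + c • 1)⁻¹)).PosSemidef := by
  set P := (S + c • 1)⁻¹
  have hdet := hS.isUnit_det_add_smul_one hc
  have hPH : Pᴴ = P := (hS.posDef_add_smul_one hc).inv.isHermitian
  have hSc : (S - c • 1).IsHermitian :=
    hS.isHermitian.sub (isHermitian_one.smul (IsSelfAdjoint.all c))
  have hsq : (S - c • 1) * (S - c • 1) = (S + c • 1) * (S + c • 1) - (4 * c) • S := by
    simp only [mul_sub, sub_mul, mul_add, add_mul, smul_mul_assoc, mul_smul_comm, one_mul,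
      mul_one]
    module
  have hconj : (c / 4) • 1 - c ^ 2 • (P * S * P) =
      P * ((c / 4) • ((S - c • 1)ᴴ * (S - c • 1))) * Pᴴ :=
    calc (c / 4) • 1 - c ^ 2 • (P * S * P)
        = (c / 4) • (P * (S + c • 1) * ((S + c • 1) * P)) - c ^ 2 • (P * S * P) := by
          rw [nonsing_inv_mul _ hdet, mul_nonsing_inv _ hdet, one_mul]
      _ = P * ((c / 4) • ((S - c • 1)ᴴ * (S - c • 1))) * Pᴴ := by
          rw [hSc.eq, hPH, hsq, smul_sub, mul_sub, sub_mul, smul_smul]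
          simp only [mul_smul_comm, smul_mul_assoc, mul_assoc]
          congr 2
          ring
  rw [hconj]
  exact ((posSemidef_conjTranspose_mul_self _).smul (by positivity)).mul_mul_conjTranspose_same P

theorem norm_resolvent_mul_sqrt_le (hS : S.PosSemidef) (hc : 0 < c) (w : EuclideanSpace ℝ n) :
    ‖toEuclideanLin (c • ((S + c • 1)⁻¹ * hS.sqrt)) w‖ ≤ √c / 2 * ‖w‖ := by
  refine norm_toEuclideanLin_le_of_posSemidef _ (by positivity) ?_ w
  rw [transpose_resolvent_mul_sqrt_mul_self hS hc, div_pow, Real.sq_sqrt hc.le]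
  norm_num
  exact hS.posSemidef_smul_one_sub_resolvent hc

end Matrix.PosSemidef

/-- **Error due to regularization on inputs in the range of the covariance** (Lemma B.5,
finite-dimensional form). With `Σ_yx = W Σ_x` and `W_λ = Σ_yx (Σ_x + λI)⁻¹`, for any
`x = Σ_x^{1/2} v` with `‖v‖ ≤ C` we have `‖(W_λ − W)x‖ ≤ (1/2)·√λ·‖W‖_F·C`. -/
theorem ridge_error_regularization {dx dy : ℕ}
    (Sx : Matrix (Fin dx) (Fin dx) ℝ) (hSx : Sx.PosSemidef)
    (W : Matrix (Fin dy) (Fin dx) ℝ) (lam : ℝ) (hlam : 0 < lam)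
    (Wlam : Matrix (Fin dy) (Fin dx) ℝ) (hWlam : Wlam = W * Sx * (Sx + lam • 1)⁻¹)
    (C : ℝ) (v : EuclideanSpace ℝ (Fin dx)) (hv : ‖v‖ ≤ C)
    (x : EuclideanSpace ℝ (Fin dx)) (hx : x = Matrix.toEuclideanLin hSx.sqrt v) :
    ‖Matrix.toEuclideanLin (Wlam - W) x‖ ≤ 1 / 2 * Real.sqrt lam * frobNorm W * C := by
  set B := lam • ((Sx + lam • 1)⁻¹ * hSx.sqrt)
  have hdiff : (Wlam - W) * hSx.sqrt = -(W * B) := by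
    rw [hWlam, Matrix.mul_assoc W, mul_inv_add_smul_one (hSx.isUnit_det_add_smul_one hlam),
      Matrix.mul_sub, Matrix.mul_one, sub_sub_cancel_left, Matrix.neg_mul, Matrix.mul_smul, Matrix.smul_mul, Matrix.mul_assoc,
      Matrix.mul_smul]
  have hBv : toEuclideanLin (Wlam - W) x = -toEuclideanLin W (toEuclideanLin B v) := by
    rw [hx, ← LinearMap.comp_apply, ← toLpLin_mul_same, hdiff, map_neg, LinearMap.neg_apply,
      toLpLin_mul_same, LinearMap.comp_apply]
  calc ‖toEuclideanLin (Wlam - W) x‖ = ‖toEuclideanLin W (toEuclideanLin B v)‖ := by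
        rw [hBv, norm_neg]
    _ ≤ frobNorm W * ‖toEuclideanLin B v‖ := norm_toEuclideanLin_le_frobNorm _ _
    _ ≤ frobNorm W * (√lam / 2 * C) := by
        gcongr
        · exact Real.sqrt_nonneg _
        · exact (hSx.norm_resolvent_mul_sqrt_le hlam v).trans (by gcongr)
    _ = 1 / 2 * Real.sqrt lam * frobNorm W * C := by ring
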